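/- arXiv:2203.06166 — 3 statements merged into one kernel-verified Lean document; each statement's English description precedes it below -/
import Mathlib

section
/- lim ≡_W MCT: the limit problem on Baire space is continuously Weihrauch equivalent to the monotone convergence theorem, i.e., to the problem of computing the supremum of a monotonically increasing bounded sequence of real numbers (given by Cauchy names). -/
open Filter Topology

abbrev Baire : Type := ℕ → ℕ

/-- The pairing `⟨p,q⟩(2n) = p(n)`, `⟨p,q⟩(2n+1) = q(n)`. -/
def pairB (p q : Baire) : Baire := fun n => if n % 2 = 0 then p (n / 2) else q (n / 2)

/-- A problem: a partial multivalued function on Baire space. -/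
structure Problem where
  dom : Set Baire
  sol : Baire → Set Baire

/-- Continuous Weihrauch reducibility. -/
def WRed (f g : Problem) : Prop :=
  ∃ (Kd Hd : Set Baire) (K H : Baire → Baire),
    ContinuousOn K Kd ∧ ContinuousOn H Hd ∧
      ∀ p ∈ f.dom, p ∈ Kd ∧ K p ∈ g.dom ∧
        ∀ q ∈ g.sol (K p), pairB p q ∈ Hd ∧ H (pairB p q) ∈ f.sol p

/-- Strong continuous Weihrauch reducibility. -/
def SWRed (f g : Problem) : Prop :=
  ∃ (Kd Hd : Set Baire) (K H : Baire → Baire),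
    ContinuousOn K Kd ∧ ContinuousOn H Hd ∧
      ∀ p ∈ f.dom, p ∈ Kd ∧ K p ∈ g.dom ∧
        ∀ q ∈ g.sol (K p), q ∈ Hd ∧ H q ∈ f.sol p

def WEquiv (f g : Problem) : Prop := WRed f g ∧ WRed g f
def SWEquiv (f g : Problem) : Prop := SWRed f g ∧ SWRed g f
def WLt (f g : Problem) : Prop := WRed f g ∧ ¬ WRed g f

/-- `range(p-1)`. -/
def rangeM (p : Baire) : Set ℕ := {n | ∃ i, p i = n + 1}

/-- Characteristic function of a set of naturals. -/
noncomputable def chi (A : Set ℕ) : Baire := A.indicator fun _ => 1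

noncomputable def EC : Problem where
  dom := Set.univ
  sol := fun p => {chi (rangeM p)}

noncomputable def EC1 : Problem where
  dom := {p | ((rangeM p)ᶜ).encard ≤ 1}
  sol := fun p => {chi (rangeM p)}

def pfst (r : Baire) : Baire := fun n => r (2 * n)
def psnd (r : Baire) : Baire := fun n => r (2 * n + 1)

noncomputable def SEP : Problem where
  dom := {r | rangeM (pfst r) ∩ rangeM (psnd r) = ∅}
  sol := fun r =>
    {s | ∃ A : Set ℕ, s = chi A ∧ rangeM (pfst r) ⊆ A ∧ A ⊆ (rangeM (psnd r))ᶜ}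

noncomputable def SEP1 : Problem where
  dom := {r | rangeM (pfst r) ∩ rangeM (psnd r) = ∅ ∧
    ((rangeM (pfst r) ∪ rangeM (psnd r))ᶜ).encard ≤ 1}
  sol := SEP.sol

/- rationals -/
def ratEnum (i : ℕ) : ℚ :=
  ((i.unpair.1 : ℚ) - (i.unpair.2.unpair.1 : ℚ)) / ((i.unpair.2.unpair.2 : ℚ) + 1)

def rhoCauchy (p : Baire) (x : ℝ) : Prop :=
  ∀ n, |(ratEnum (p n) : ℝ) - x| ≤ (2 : ℝ) ^ (-(n : ℤ))

def rhoNaive (p : Baire) (x : ℝ) : Prop :=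
  Tendsto (fun n => ((ratEnum (p n) : ℝ))) atTop (nhds x)

def rhoLt (p : Baire) (x : ℝ) : Prop := rangeM p = {n | (ratEnum n : ℝ) < x}
def rhoGt (p : Baire) (x : ℝ) : Prop := rangeM p = {n | x < (ratEnum n : ℝ)}

def rhoCfLt (p : Baire) (x : ℝ) : Prop :=
  (∀ n, p n ≤ 1) ∧ ∀ n, (p n = 1 ↔ (ratEnum n : ℝ) < x)
def rhoCfGt (p : Baire) (x : ℝ) : Prop :=
  (∀ n, p n ≤ 1) ∧ ∀ n, (p n = 1 ↔ x < (ratEnum n : ℝ))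

noncomputable def cfTail : List ℕ → ℝ
  | [] => 0
  | b :: l => 1 / ((b : ℝ) + cfTail l)

noncomputable def cfApprox (p : Baire) (k : ℕ) : ℝ :=
  ((Denumerable.ofNat ℤ (p 0) : ℤ) : ℝ) + cfTail ((List.range k).map fun i => p (i + 1))

def rhoCf (p : Baire) (x : ℝ) : Prop :=
  ((∀ i, 1 ≤ i → 1 ≤ p i) ∧ Tendsto (cfApprox p) atTop (nhds x)) ∨
    (∃ k, 1 ≤ k ∧ p k = 0 ∧ (∀ i, 1 ≤ i → i < k → 1 ≤ p i) ∧
      (2 ≤ k → 2 ≤ p (k - 1)) ∧ x = cfApprox p (k - 1))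

def rhoDec (p : Baire) (x : ℝ) : Prop :=
  (∀ n, 1 ≤ n → p n ≤ 9) ∧
    x = ((Denumerable.ofNat ℤ (p 0) : ℤ) : ℝ) + ∑' n : ℕ, (p (n + 1) : ℝ) / 10 ^ (n + 1)

/-- The implication problem between two representations of ℝ. -/
def implProblem (d1 d2 : Baire → ℝ → Prop) : Problem where
  dom := {p | ∃ x, d1 p x}
  sol := fun p => {q | ∃ x, d1 p x ∧ d2 q x}

/- trees / WKL / choice on Cantor space -/
def wordCode : List Bool → ℕ
  | [] => 0
  | b :: w => 2 * wordCode w + (if b then 2 else 1)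

def prefixList (x : Baire) (k : ℕ) : List Bool := (List.range k).map fun i => decide (x i = 1)

def isTreeCode (t : Baire) : Prop :=
  (∀ n, t n ≤ 1) ∧
    ∀ w v : List Bool, w <+: v → t (wordCode v) = 1 → t (wordCode w) = 1

def WKL : Problem where
  dom := {t | isTreeCode t ∧ {w : List Bool | t (wordCode w) = 1}.Infinite}
  sol := fun t => {x | (∀ n, x n ≤ 1) ∧ ∀ k, t (wordCode (prefixList x k)) = 1}

def Ap (p : Baire) : Set Baire :=
  {x | (∀ n, x n ≤ 1) ∧ ∀ k, wordCode (prefixList x k) ∉ rangeM p}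

def CCantor : Problem where
  dom := {p | (Ap p).Nonempty}
  sol := Ap

def Cle2 : Problem where
  dom := {p | (Ap p).Nonempty ∧ (Ap p).encard ≤ 2}
  sol := Ap

/- limit and parallelization -/
def projCount (r : Baire) (n : ℕ) : Baire := fun k => r (Nat.pair n k)

def limP : Problem where
  dom := {r | ∃ q : Baire, ∀ k, Tendsto (fun n => projCount r n k) atTop (nhds (q k))}
  sol := fun r => {q | ∀ k, Tendsto (fun n => projCount r n k) atTop (nhds (q k))}

def parallel (f : Problem) : Problem where
  dom := {r | ∀ n, projCount r n ∈ f.dom}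
  sol := fun r => {s | ∀ n, projCount s n ∈ f.sol (projCount r n)}

def MCT : Problem where
  dom := {r | ∃ xs : ℕ → ℝ, (∀ n, rhoCauchy (projCount r n) (xs n)) ∧
    Monotone xs ∧ BddAbove (Set.range xs)}
  sol := fun r => {q | ∃ xs : ℕ → ℝ, (∀ n, rhoCauchy (projCount r n) (xs n)) ∧
    Monotone xs ∧ BddAbove (Set.range xs) ∧ rhoCauchy q (⨆ n, xs n)}

/- SORT and RAT -/
open Classical in
noncomputable def sortOut (p : Baire) : Baire := fun k =>
  if {i | p i = 0}.Infinite then 0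
  else if k < {i | p i = 0}.ncard then 0 else 1

noncomputable def SORT : Problem where
  dom := {p | ∀ n, p n ≤ 1}
  sol := fun p => {sortOut p}

def znk (n : ℕ) : Baire := fun k => if k < n then 0 else 1

def RAT : Problem where
  dom := {p | ∃ x, rhoCauchy p x}
  sol := fun p => {s | ∃ x, rhoCauchy p x ∧
    ((∃ n, x = (ratEnum n : ℝ) ∧ s = znk n) ∨
      ((∀ r : ℚ, x ≠ (r : ℝ)) ∧ s = fun _ => 0))}

/- omniscience principles -/
def projFin (m i : ℕ) (r : Baire) : Baire := fun k => r (m * k + i - 1)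
def isZeroSeq (p : Baire) : Prop := ∀ k, p k = 0
def constSeq (i : ℕ) : Baire := fun _ => i

noncomputable def LPOn (n : ℕ) : Problem where
  dom := Set.univ
  sol := fun r => {constSeq ({i | 1 ≤ i ∧ i ≤ n ∧ isZeroSeq (projFin n i r)}.ncard)}

def LLPOn (n : ℕ) : Problem where
  dom := {r | {i | 1 ≤ i ∧ i ≤ n ∧ ¬ isZeroSeq (projFin n i r)}.encard ≤ 1}
  sol := fun r => {s | ∃ i, 1 ≤ i ∧ i ≤ n ∧ isZeroSeq (projFin n i r) ∧ s = constSeq i}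

def MLPOn (n : ℕ) : Problem where
  dom := {r | ∃ i, 1 ≤ i ∧ i ≤ n ∧ isZeroSeq (projFin n i r)}
  sol := fun r => {s | ∃ i, 1 ≤ i ∧ i ≤ n ∧ isZeroSeq (projFin n i r) ∧ s = constSeq i}

def LPO : Problem where
  dom := Set.univ
  sol := fun p => {s | (isZeroSeq p ∧ s = constSeq 1) ∨ (¬ isZeroSeq p ∧ s = constSeq 0)}

/- choice problems on ℕ etc. -/
def Cfin (n : ℕ) : Problem where
  dom := {p | ∃ i, i < n ∧ i ∉ rangeM p}
  sol := fun p => {s | ∃ i, i < n ∧ i ∉ rangeM p ∧ s = constSeq i}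

def ACCfin (n : ℕ) : Problem where
  dom := {p | (∃ i, i < n ∧ i ∉ rangeM p) ∧ ({i | i < n} ∩ rangeM p).encard ≤ 1}
  sol := (Cfin n).sol

def CNat : Problem where
  dom := {p | ∃ i, i ∉ rangeM p}
  sol := fun p => {s | ∃ i, i ∉ rangeM p ∧ s = constSeq i}

/- differentiation -/
instance : Countable (AddMonoidAlgebra ℚ ℕ) :=
  AddMonoidAlgebra.coeff_injective.countable

instance : Countable (Polynomial ℚ) :=
  Polynomial.toFinsupp_injective.countable

noncomputable def polyEnum : ℕ → Polynomial ℚ :=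
  (exists_surjective_nat (Polynomial ℚ)).choose

noncomputable def polyFun (k : ℕ) : C(Set.Icc (0:ℝ) 1, ℝ) :=
  ⟨fun x => ((polyEnum k).map (algebraMap ℚ ℝ)).eval (x : ℝ),
   (((polyEnum k).map (algebraMap ℚ ℝ)).continuous).comp continuous_subtype_val⟩

noncomputable def deltaC (p : Baire) (f : C(Set.Icc (0:ℝ) 1, ℝ)) : Prop :=
  ∀ n, ‖f - polyFun (p n)‖ ≤ (2 : ℝ) ^ (-(n : ℤ))

def IsDerivOn (f g : C(Set.Icc (0:ℝ) 1, ℝ)) : Prop :=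
  ∀ x : Set.Icc (0:ℝ) 1,
    HasDerivWithinAt (Set.IccExtend (by norm_num : (0:ℝ) ≤ 1) f) (g x) (Set.Icc 0 1) (x : ℝ)

noncomputable def diffP : Problem where
  dom := {p | ∃ f g, deltaC p f ∧ IsDerivOn f g}
  sol := fun p => {q | ∃ f g, deltaC p f ∧ IsDerivOn f g ∧ deltaC q g}

/-!
`MCT ≤ lim`: approximate the `n`-th real `xₙ` to precision `2^-(k+1)` by `aₙ`, and let `cₙ` be
the running maximum of `⌊aₘ 2^(k+1)⌋` over `m ≤ n`. This is a bounded monotone sequence of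
integers, so it is eventually constant, and its final value divided by `2^(k+1)` lies within
`2^-k` of `sup xₙ`.

`lim ≤ MCT`: from `⟨p₀, p₁, …⟩` form the increasing bounded rationals
`xₘ = ∑_{k ≤ m} 2^-k (1 - 2^-cₘ(k))`, where `cₘ(k)` counts the changes of the `k`-th coordinate
before stage `m`. A change of coordinate `k` after stage `m` raises the sequence by at least
`2^-k 2^-(cₘ(k)+1)`. Given a name of `y = sup xₘ`, search for a stage `m ≥ k` at which the name
certifies `y < xₘ + 2^-k 2^-(cₘ(k)+1)`; such a stage exists because `xₘ → y` and `cₘ(k)` is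
eventually constant, and after it coordinate `k` never changes, so `pₘ(k)` is the limit.
-/

open Set

theorem DependsOn.isLocallyConstant {ι α Y : Type*} [TopologicalSpace α] [DiscreteTopology α]
    {f : (ι → α) → Y} {s : Set ι} (hs : s.Finite) (hf : DependsOn f s) :
    IsLocallyConstant f := by
  refine (IsLocallyConstant.iff_eventually_eq f).2 fun x => ?_
  have hcoord : ∀ i ∈ s, ∀ᶠ y in 𝓝 x, y i = x i := fun i _ =>
    (continuous_apply i).continuousAt ((isOpen_discrete {x i}).mem_nhds rfl)
  filter_upwards [(hs.eventually_all).2 hcoord] with y hy using hf hy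

theorem Nat.eventually_find_eq {X : Type*} [TopologicalSpace X] {P : X → ℕ → Prop}
    [∀ x, DecidablePred (P x)] (hP : ∀ c, IsLocallyConstant fun x => P x c) {x : X}
    (hx : ∃ c, P x c) : ∀ᶠ y in 𝓝 x, ∃ hy : ∃ c, P y c, Nat.find hy = Nat.find hx := by
  have hle : ∀ᶠ y in 𝓝 x, ∀ c ∈ Iic (Nat.find hx), P y c = P x c :=
    (finite_Iic _).eventually_all.2 fun c _ => (hP c).eventually_eq x
  filter_upwards [hle] with y hy
  have hfind : P y (Nat.find hx) := by rw [hy _ (mem_Iic.2 le_rfl)]; exact Nat.find_spec hx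
  refine ⟨⟨_, hfind⟩, (Nat.find_eq_iff _).2 ⟨hfind, fun c hc => ?_⟩⟩
  rw [hy c (mem_Iic.2 hc.le)]
  exact Nat.find_min hx hc

theorem Nat.pair_lt_add_one_sq_of_le {a b m : ℕ} (ha : a ≤ m) (hb : b ≤ m) :
    Nat.pair a b < (m + 1) ^ 2 :=
  (Nat.pair_lt_max_add_one_sq a b).trans_le (Nat.pow_le_pow_left (by omega) 2)

def ratCode (s : ℚ) : ℕ := Nat.pair s.num.toNat (Nat.pair (-s.num).toNat (s.den - 1))

theorem ratEnum_ratCode (s : ℚ) : ratEnum (ratCode s) = s := by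
  have hnum : ((s.num.toNat : ℚ) - ((-s.num).toNat : ℚ)) = s.num := by
    exact_mod_cast Int.toNat_sub_toNat_neg s.num
  have hden : ((s.den - 1 : ℕ) : ℚ) + 1 = s.den := by
    rw [Nat.cast_sub s.den_pos, Nat.cast_one, sub_add_cancel]
  simp only [ratEnum, ratCode, Nat.unpair_pair, hnum, hden, Rat.num_div_den]

theorem rhoCauchy_iff {p : Baire} {x : ℝ} :
    rhoCauchy p x ↔ ∀ n, |(ratEnum (p n) : ℝ) - x| ≤ (1 / 2) ^ n := by
  simp only [rhoCauchy, zpow_neg, zpow_natCast, one_div, inv_pow]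

theorem rhoCauchy_const (s : ℚ) : rhoCauchy (fun _ => ratCode s) s := fun n => by
  simp only [ratEnum_ratCode, sub_self, abs_zero]
  positivity

theorem rhoCauchy.unique {p : Baire} {x y : ℝ} (hx : rhoCauchy p x) (hy : rhoCauchy p y) :
    x = y := by
  refine eq_of_forall_dist_le fun ε hε => ?_
  obtain ⟨n, hn⟩ := exists_pow_lt_of_lt_one (half_pos hε) (by norm_num : (1 / 2 : ℝ) < 1)
  have hxn := rhoCauchy_iff.1 hx n
  have hyn := rhoCauchy_iff.1 hy n
  calc dist x y ≤ |(ratEnum (p n) : ℝ) - x| + |(ratEnum (p n) : ℝ) - y| := by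
        rw [Real.dist_eq, abs_sub_comm _ x]; exact abs_sub_le _ _ _
    _ ≤ ε := by linarith

theorem pfst_pairB (p q : Baire) : pfst (pairB p q) = p := by
  funext n
  simp [pfst, pairB]

theorem psnd_pairB (p q : Baire) : psnd (pairB p q) = q := by
  funext n
  simp [psnd, pairB, Nat.add_mod, Nat.add_div]

theorem continuous_psnd : Continuous psnd :=
  continuous_pi fun n => continuous_apply (2 * n + 1)

theorem abs_sub_ciSup_le_of_approx {xs a : ℕ → ℝ} (hbdd : BddAbove (range xs)) {ε δ o : ℝ}
    (ha : ∀ m, |a m - xs m| ≤ ε) (hlow : ∃ m, o ≤ a m) (hup : ∀ m, a m < o + δ) :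
    |o - ⨆ n, xs n| ≤ ε + δ := by
  obtain ⟨m₀, hm₀⟩ := hlow
  have hδ : 0 < δ := by linarith [hup m₀]
  have hsup_le : (⨆ n, xs n) ≤ o + δ + ε := ciSup_le fun m => by
    linarith [(abs_le.1 (ha m)).1, hup m]
  have hle_sup : o - ε ≤ ⨆ n, xs n := by
    linarith [le_ciSup hbdd m₀, (abs_le.1 (ha m₀)).2]
  rw [abs_le]
  constructor <;> linarith

namespace MCTLeLim

noncomputable def gridMax (r : Baire) (k n : ℕ) : ℤ :=
  (Finset.range (n + 1)).sup' Finset.nonempty_range_add_one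
    fun m => ⌊(ratEnum (r (Nat.pair m (k + 1))) : ℝ) * 2 ^ (k + 1)⌋

noncomputable def pre (r : Baire) : Baire := fun i =>
  ratCode (gridMax r i.unpair.2 i.unpair.1 / 2 ^ (i.unpair.2 + 1))

variable {r : Baire} {k : ℕ}

theorem gridMax_mono : Monotone (gridMax r k) := fun _ _ h =>
  Finset.sup'_mono _ (Finset.range_subset_range.2 (Nat.succ_le_succ h)) _

theorem floor_le_gridMax {m n : ℕ} (h : m ≤ n) :
    ⌊(ratEnum (r (Nat.pair m (k + 1))) : ℝ) * 2 ^ (k + 1)⌋ ≤ gridMax r k n :=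
  Finset.le_sup' (fun m => ⌊(ratEnum (r (Nat.pair m (k + 1))) : ℝ) * 2 ^ (k + 1)⌋)
    (Finset.mem_range_succ_iff.2 h)

theorem exists_gridMax_eq (n : ℕ) :
    ∃ m, gridMax r k n = ⌊(ratEnum (r (Nat.pair m (k + 1))) : ℝ) * 2 ^ (k + 1)⌋ := by
  obtain ⟨m, -, hm⟩ := Finset.exists_mem_eq_sup' Finset.nonempty_range_add_one
    fun m => ⌊(ratEnum (r (Nat.pair m (k + 1))) : ℝ) * 2 ^ (k + 1)⌋
  exact ⟨m, hm⟩

theorem gridMax_dependsOn (k n : ℕ) :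
    DependsOn (fun r => gridMax r k n) ((fun m => Nat.pair m (k + 1)) '' Iic n) := by
  intro r r' h
  refine Finset.sup'_congr _ rfl fun m hm => ?_
  rw [h _ ⟨m, Finset.mem_range_succ_iff.1 hm, rfl⟩]

theorem continuous_pre : Continuous pre := continuous_pi fun i =>
  (((gridMax_dependsOn _ _).isLocallyConstant ((finite_Iic _).image _)).comp
    fun c => ratCode (c / 2 ^ (i.unpair.2 + 1))).continuous

variable {xs : ℕ → ℝ} (hname : ∀ n, rhoCauchy (projCount r n) (xs n))
  (hbdd : BddAbove (range xs))
include hname hbdd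

theorem bddAbove_range_gridMax : BddAbove (range (gridMax r k)) := by
  obtain ⟨B, hB⟩ := hbdd
  refine ⟨⌊(B + 1) * 2 ^ (k + 1)⌋, ?_⟩
  rintro _ ⟨n, rfl⟩
  obtain ⟨m, hm⟩ := exists_gridMax_eq (r := r) (k := k) n
  rw [hm]
  refine Int.floor_mono (mul_le_mul_of_nonneg_right ?_ (by positivity))
  have happrox := (abs_le.1 (rhoCauchy_iff.1 (hname m) (k + 1))).2
  have hpow : ((1 : ℝ) / 2) ^ (k + 1) ≤ 1 := pow_le_one₀ (by norm_num) (by norm_num)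
  simp only [projCount] at happrox
  linarith [hB ⟨m, rfl⟩]

theorem eventually_gridMax_eq_iSup : ∀ᶠ n in atTop, gridMax r k n = ⨆ n, gridMax r k n := by
  have := tendsto_atTop_ciSup gridMax_mono (bddAbove_range_gridMax hname hbdd (k := k))
  rwa [nhds_discrete, tendsto_pure] at this

theorem rhoCauchy_iSup_gridMax :
    rhoCauchy (fun k => ratCode ((⨆ n, gridMax r k n) / 2 ^ (k + 1))) (⨆ n, xs n) := by
  refine rhoCauchy_iff.2 fun k => ?_
  obtain ⟨N, hN⟩ := (eventually_gridMax_eq_iSup hname hbdd (k := k)).exists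
  set c := ⨆ n, gridMax r k n
  set a : ℕ → ℝ := fun m => ratEnum (r (Nat.pair m (k + 1)))
  have hpos : (0 : ℝ) < 2 ^ (k + 1) := by positivity
  have hlow : ∃ m, (c : ℝ) / 2 ^ (k + 1) ≤ a m := by
    obtain ⟨m, hm⟩ := exists_gridMax_eq (r := r) (k := k) N
    refine ⟨m, (div_le_iff₀ hpos).2 ?_⟩
    rw [← hN, hm]
    exact Int.floor_le _
  have hup : ∀ m, a m < c / 2 ^ (k + 1) + (1 / 2) ^ (k + 1) := fun m => by
    have hfloor : ⌊a m * 2 ^ (k + 1)⌋ ≤ c :=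
      (floor_le_gridMax le_rfl).trans (le_ciSup (bddAbove_range_gridMax hname hbdd) m)
    have hlt := Int.lt_floor_add_one (a m * 2 ^ (k + 1))
    have hc : (⌊a m * 2 ^ (k + 1)⌋ : ℝ) ≤ c := by exact_mod_cast hfloor
    rw [one_div_pow, ← add_div, lt_div_iff₀ hpos]
    linarith
  have hdist := abs_sub_ciSup_le_of_approx hbdd (fun m => rhoCauchy_iff.1 (hname m) (k + 1))
    hlow hup
  simp only [ratEnum_ratCode]
  push_cast
  exact hdist.trans_eq (by ring)

theorem tendsto_projCount_pre (k : ℕ) : Tendsto (fun n => projCount (pre r) n k) atTop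
    (𝓝 (ratCode ((⨆ n, gridMax r k n) / 2 ^ (k + 1)))) := by
  rw [nhds_discrete, tendsto_pure]
  filter_upwards [eventually_gridMax_eq_iSup hname hbdd (k := k)] with n hn
  simp only [projCount, pre, Nat.unpair_pair, hn]

end MCTLeLim

open MCTLeLim in
theorem MCT_le_limP : WRed MCT limP := by
  refine ⟨univ, univ, pre, psnd, continuous_pre.continuousOn, continuous_psnd.continuousOn, ?_⟩
  rintro r ⟨xs, hname, hmono, hbdd⟩
  have hlim := tendsto_projCount_pre hname hbdd
  refine ⟨trivial, ⟨_, hlim⟩, fun q hq => ⟨trivial, ?_⟩⟩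
  rw [psnd_pairB, funext fun k => tendsto_nhds_unique (hq k) (hlim k)]
  exact ⟨xs, hname, hmono, hbdd, rhoCauchy_iSup_gridMax hname hbdd⟩

namespace LimLeMCT

def changeCount (r : Baire) (m k : ℕ) : ℕ :=
  ((Finset.range m).filter fun j => r (Nat.pair (j + 1) k) ≠ r (Nat.pair j k)).card

def approxTerm (r : Baire) (m k : ℕ) : ℚ := (1 - (1 / 2) ^ changeCount r m k) * (1 / 2) ^ k

def approx (r : Baire) (m : ℕ) : ℚ := ∑ k ∈ Finset.range (m + 1), approxTerm r m k

variable {r : Baire}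

theorem changeCount_mono (k : ℕ) : Monotone fun m => changeCount r m k := fun _ _ h =>
  Finset.card_le_card (Finset.filter_subset_filter _ (Finset.range_subset_range.2 h))

theorem changeCount_lt_of_ne {k m j : ℕ} (hmj : m ≤ j)
    (hj : r (Nat.pair (j + 1) k) ≠ r (Nat.pair j k)) :
    changeCount r m k < changeCount r (j + 1) k := by
  refine Finset.card_lt_card ((Finset.ssubset_iff_of_subset ?_).2 ⟨j, ?_, ?_⟩)
  · exact Finset.filter_subset_filter _ (Finset.range_subset_range.2 (by omega))
  · simp [hj]
  · simp only [Finset.mem_filter, Finset.mem_range, not_and]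
    omega

theorem changeCount_eq_of_forall_eq {k M : ℕ}
    (h : ∀ j ≥ M, r (Nat.pair (j + 1) k) = r (Nat.pair j k)) {m : ℕ} (hm : M ≤ m) :
    changeCount r m k = changeCount r M k := by
  induction m, hm using Nat.le_induction with
  | base => rfl
  | succ n hn ih =>
    rw [← ih, changeCount, Finset.range_add_one, Finset.filter_insert, if_neg (not_not.2 (h n hn))]
    rfl

theorem changeCount_congr {r' : Baire} {m k : ℕ}
    (h : ∀ a ≤ m, r (Nat.pair a k) = r' (Nat.pair a k)) : changeCount r m k = changeCount r' m k := by
  refine congrArg Finset.card (Finset.filter_congr fun j hj => ?_)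
  have hj := Finset.mem_range.1 hj
  rw [h (j + 1) (by omega), h j hj.le]

theorem approxTerm_nonneg (m k : ℕ) : 0 ≤ approxTerm r m k :=
  mul_nonneg (sub_nonneg.2 (pow_le_one₀ (by norm_num) (by norm_num))) (by positivity)

theorem approxTerm_mono (k : ℕ) : Monotone fun m => approxTerm r m k := fun _ _ h =>
  mul_le_mul_of_nonneg_right
    (sub_le_sub_left (pow_le_pow_of_le_one (by norm_num) (by norm_num) (changeCount_mono k h)) _)
    (by positivity)

theorem sum_approxTerm_le_approx {m m' : ℕ} (h : m ≤ m') :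
    ∑ k ∈ Finset.range (m + 1), approxTerm r m' k ≤ approx r m' :=
  Finset.sum_le_sum_of_subset_of_nonneg (Finset.range_subset_range.2 (by omega))
    fun k _ _ => approxTerm_nonneg _ _

theorem approx_mono : Monotone (approx r) := fun _ _ h =>
  (Finset.sum_le_sum fun k _ => approxTerm_mono k h).trans (sum_approxTerm_le_approx h)

theorem approxTerm_sub_le {m m' k : ℕ} (hk : k ≤ m) (h : m ≤ m') :
    approxTerm r m' k - approxTerm r m k ≤ approx r m' - approx r m := by
  have hsingle : approxTerm r m' k - approxTerm r m k ≤
      ∑ i ∈ Finset.range (m + 1), (approxTerm r m' i - approxTerm r m i) :=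
    Finset.single_le_sum (f := fun i => approxTerm r m' i - approxTerm r m i)
      (fun i _ => sub_nonneg.2 (approxTerm_mono i h)) (Finset.mem_range_succ_iff.2 hk)
  rw [Finset.sum_sub_distrib] at hsingle
  linarith [sum_approxTerm_le_approx (r := r) h, show approx r m = ∑ i ∈ Finset.range (m + 1),
    approxTerm r m i from rfl]

theorem approx_le_two (m : ℕ) : (approx r m : ℝ) ≤ 2 :=
  calc (approx r m : ℝ) ≤ ∑ k ∈ Finset.range (m + 1), (1 / 2 : ℝ) ^ k := by
        simp only [approx, approxTerm, Rat.cast_sum, Rat.cast_mul, Rat.cast_sub, Rat.cast_pow,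
          Rat.cast_one, Rat.cast_div, Rat.cast_ofNat]
        refine Finset.sum_le_sum fun k _ => mul_le_of_le_one_left (by positivity) ?_
        linarith [pow_pos (by norm_num : (0 : ℝ) < 1 / 2) (changeCount r m k)]
    _ ≤ 2 := sum_geometric_two_le _

theorem bddAbove_range_approx : BddAbove (range fun n => (approx r n : ℝ)) :=
  ⟨2, by rintro _ ⟨n, rfl⟩; exact approx_le_two n⟩

theorem approx_add_le_of_ne {k m j : ℕ} (hk : k ≤ m) (hmj : m ≤ j)
    (hj : r (Nat.pair (j + 1) k) ≠ r (Nat.pair j k)) :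
    approx r m + (1 / 2) ^ (changeCount r m k + 1) * (1 / 2) ^ k ≤ approx r (j + 1) := by
  have hdiff := approxTerm_sub_le (r := r) hk (show m ≤ j + 1 by omega)
  have hpow : ((1 : ℚ) / 2) ^ changeCount r (j + 1) k ≤ (1 / 2) ^ (changeCount r m k + 1) :=
    pow_le_pow_of_le_one (by norm_num) (by norm_num) (changeCount_lt_of_ne hmj hj)
  have hk : (0 : ℚ) ≤ (1 / 2) ^ k := by positivity
  rw [pow_succ] at hpow ⊢
  unfold approxTerm at hdiff
  nlinarith

theorem approx_congr {r' : Baire} {m : ℕ}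
    (h : ∀ a ≤ m, ∀ b ≤ m, r (Nat.pair a b) = r' (Nat.pair a b)) : approx r m = approx r' m :=
  Finset.sum_congr rfl fun k hk => by
    rw [approxTerm, approxTerm,
      changeCount_congr fun a ha => h a ha k (Finset.mem_range_succ_iff.1 hk)]

noncomputable def pre (r : Baire) : Baire := fun i => ratCode (approx r i.unpair.1)

theorem projCount_pre (n : ℕ) : projCount (pre r) n = fun _ => ratCode (approx r n) := by
  funext k
  simp only [projCount, pre, Nat.unpair_pair]

theorem continuous_pre : Continuous pre := by
  have hdep (m : ℕ) : DependsOn (fun r => approx r m) (Iio ((m + 1) ^ 2)) := fun r r' h =>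
    approx_congr fun a ha b hb => h _ (Nat.pair_lt_add_one_sq_of_le ha hb)
  exact continuous_pi fun i =>
    (((hdep _).isLocallyConstant (finite_Iio _)).comp ratCode).continuous

theorem pre_mem_dom : pre r ∈ MCT.dom := by
  refine ⟨fun n => approx r n, fun n => ?_, fun _ _ h => Rat.cast_le.2 (approx_mono h),
    bddAbove_range_approx⟩
  rw [projCount_pre]
  exact rhoCauchy_const _

theorem rhoCauchy_of_mem_sol_pre {q : Baire} (hq : q ∈ MCT.sol (pre r)) :
    rhoCauchy q (⨆ n, (approx r n : ℝ)) := by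
  obtain ⟨xs, hname, -, -, hq⟩ := hq
  have hxs : xs = fun n => (approx r n : ℝ) := funext fun n =>
    (hname n).unique (by rw [projCount_pre]; exact rhoCauchy_const _)
  rwa [hxs] at hq

/-- With `c = ⟨m, n⟩`, the `n`-th rational of the name `q` certifies that its value lies below
`approx r m` plus the least increase that a later change of coordinate `k` would cause. -/
def IsWitness (r q : Baire) (k c : ℕ) : Prop :=
  k ≤ c.unpair.1 ∧ ratEnum (q c.unpair.2) + (1 / 2) ^ c.unpair.2 <
    approx r c.unpair.1 + (1 / 2) ^ (changeCount r c.unpair.1 k + 1) * (1 / 2) ^ k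

instance (r q : Baire) (k : ℕ) : DecidablePred (IsWitness r q k) := fun _ => by
  unfold IsWitness
  infer_instance

theorem isWitness_dependsOn (k c : ℕ) : DependsOn (fun z => IsWitness (pfst z) (psnd z) k c)
    ((2 * ·) '' Iio ((c.unpair.1 + k + 1) ^ 2) ∪ {2 * c.unpair.2 + 1}) := by
  intro z z' h
  have hpair : ∀ a ≤ c.unpair.1 + k, ∀ b ≤ c.unpair.1 + k,
      pfst z (Nat.pair a b) = pfst z' (Nat.pair a b) := fun a ha b hb =>
    h _ (Or.inl ⟨_, Nat.pair_lt_add_one_sq_of_le ha hb, rfl⟩)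
  have happrox : approx (pfst z) c.unpair.1 = approx (pfst z') c.unpair.1 :=
    approx_congr fun a ha b hb => hpair a (by omega) b (by omega)
  have hcount : changeCount (pfst z) c.unpair.1 k = changeCount (pfst z') c.unpair.1 k :=
    changeCount_congr fun a ha => hpair a (by omega) k (by omega)
  have hsnd : psnd z c.unpair.2 = psnd z' c.unpair.2 := h _ (Or.inr rfl)
  simp only [IsWitness, happrox, hcount, hsnd]

open Classical in
noncomputable def post (z : Baire) : Baire := fun k =>
  if h : ∃ c, IsWitness (pfst z) (psnd z) k c then pfst z (Nat.pair (Nat.find h).unpair.1 k)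
  else 0

def postDom : Set Baire := {z | ∀ k, ∃ c, IsWitness (pfst z) (psnd z) k c}

theorem continuousOn_post : ContinuousOn post postDom := by
  refine continuousOn_pi.2 fun k z hz => ContinuousAt.continuousWithinAt ?_
  have hfind := Nat.eventually_find_eq (P := fun z c => IsWitness (pfst z) (psnd z) k c)
    (fun c => (isWitness_dependsOn k c).isLocallyConstant
      (((finite_Iio _).image _).union (finite_singleton _))) (hz k)
  set i := 2 * Nat.pair (Nat.find (hz k)).unpair.1 k
  have hcoord : ∀ᶠ z' in 𝓝 z, z' i = z i :=
    (continuous_apply i).continuousAt ((isOpen_discrete {z i}).mem_nhds rfl)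
  refine (continuousAt_const (y := post z k)).congr ?_
  filter_upwards [hfind, hcoord] with z' ⟨hz', hc⟩ hcoord
  simp only [post, dif_pos hz', dif_pos (hz k), hc]
  exact hcoord.symm

theorem exists_isWitness_post_eq {z : Baire} {k : ℕ} (h : ∃ c, IsWitness (pfst z) (psnd z) k c) :
    ∃ c, IsWitness (pfst z) (psnd z) k c ∧ post z k = pfst z (Nat.pair c.unpair.1 k) :=
  ⟨Nat.find h, Nat.find_spec h, dif_pos h⟩

variable {q : Baire} (hq : rhoCauchy q (⨆ n, (approx r n : ℝ)))
include hq

theorem eq_of_isWitness {k c : ℕ} (hw : IsWitness r q k c) {j : ℕ} (hj : c.unpair.1 ≤ j) :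
    r (Nat.pair j k) = r (Nat.pair c.unpair.1 k) := by
  obtain ⟨hk, hlt⟩ := hw
  have hsup : ⨆ n, (approx r n : ℝ) <
      approx r c.unpair.1 + (1 / 2) ^ (changeCount r c.unpair.1 k + 1) * (1 / 2) ^ k := by
    have hlt' := (Rat.cast_lt (K := ℝ)).2 hlt
    push_cast at hlt'
    linarith [(abs_le.1 (rhoCauchy_iff.1 hq c.unpair.2)).1]
  induction j, hj using Nat.le_induction with
  | base => rfl
  | succ j hj ih =>
    rw [← ih]
    by_contra hne
    have hjump := (Rat.cast_le (K := ℝ)).2 (approx_add_le_of_ne hk hj hne)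
    push_cast at hjump
    linarith [le_ciSup (bddAbove_range_approx (r := r)) (j + 1)]

theorem exists_isWitness (hr : r ∈ limP.dom) (k : ℕ) : ∃ c, IsWitness r q k c := by
  obtain ⟨M, hkM, hM⟩ : ∃ M, k ≤ M ∧ ∀ j ≥ M, r (Nat.pair (j + 1) k) = r (Nat.pair j k) := by
    obtain ⟨p, hp⟩ := hr
    have hconst := hp k
    rw [nhds_discrete, tendsto_pure, eventually_atTop] at hconst
    obtain ⟨M, hM⟩ := hconst
    exact ⟨max M k, le_max_right _ _, fun j hj =>
      (hM (j + 1) (by omega)).trans (hM j (by omega)).symm⟩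
  set y := ⨆ n, (approx r n : ℝ)
  set δ : ℝ := (1 / 2) ^ (changeCount r M k + 1) * (1 / 2) ^ k
  have hδ : 0 < δ := by positivity
  have hconv : Tendsto (fun n => (approx r n : ℝ)) atTop (𝓝 y) :=
    tendsto_atTop_ciSup (fun _ _ h => Rat.cast_le.2 (approx_mono h)) bddAbove_range_approx
  obtain ⟨m, hm, hMm⟩ := ((hconv.eventually (lt_mem_nhds (by linarith : y - δ / 2 < y))).and
    (eventually_ge_atTop M)).exists
  obtain ⟨n, hn⟩ := exists_pow_lt_of_lt_one (by linarith : 0 < δ / 4)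
    (by norm_num : (1 / 2 : ℝ) < 1)
  refine ⟨Nat.pair m n, ?_⟩
  simp only [IsWitness, Nat.unpair_pair, changeCount_eq_of_forall_eq hM hMm]
  refine ⟨by omega, (Rat.cast_lt (K := ℝ)).1 ?_⟩
  push_cast
  linarith [(abs_le.1 (rhoCauchy_iff.1 hq n)).2]

end LimLeMCT

open LimLeMCT in
theorem limP_le_MCT : WRed limP MCT := by
  refine ⟨univ, postDom, pre, post, continuous_pre.continuousOn, continuousOn_post, ?_⟩
  intro r hr
  refine ⟨trivial, pre_mem_dom, fun q hsol => ?_⟩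
  have hq := rhoCauchy_of_mem_sol_pre hsol
  have hw := exists_isWitness hq hr
  have hdom : pairB r q ∈ postDom := by
    show ∀ k, ∃ c, IsWitness (pfst (pairB r q)) (psnd (pairB r q)) k c
    rwa [pfst_pairB, psnd_pairB]
  refine ⟨hdom, fun k => ?_⟩
  obtain ⟨c, hc, hpost⟩ := exists_isWitness_post_eq (hdom k)
  rw [pfst_pairB, psnd_pairB] at hc
  rw [pfst_pairB] at hpost
  rw [hpost, nhds_discrete, tendsto_pure]
  exact eventually_atTop.2 ⟨_, fun j hj => eq_of_isWitness hq hc hj⟩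

/-- `lim ≡_W MCT`. -/
theorem lim_equiv_MCT : WEquiv limP MCT := ⟨limP_le_MCT, MCT_le_limP⟩
end

section
/- For all n ≥ 1: LLPO_{n+2} <_W LLPO_{n+1} <_W LPO, i.e., LLPO_{n+2} is strictly continuously Weihrauch below LLPO_{n+1}, which in turn is strictly continuously Weihrauch below LPO. -/
open Filter Topology

/-!
Suppose `f ≤_W LLPO_M` via `K, H`, where the `f`-solutions at `a` take fewer than `M` values
at position `0` and each such value `v` is ruled out at instances `P v L → a`. A correct answer
`j` at `K a` makes `H` return some value `h j`; by continuity of `H`, `j` must become wrong at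
`K (P (h j) L)` for large `L`, while by continuity of `K` a component already nonzero at `K a`
stays nonzero there. As `LLPO_M` tolerates only one nonzero component, all `M` answers are
correct at `K a` and `j ↦ h j` is injective, contradicting the pigeonhole principle. This
separates `LLPO_{m+1}` from `LLPO_m` (values: the indices `1, …, m`) and `LLPO_m` from `LPO`
(value: `1`). Conversely, `LLPO_{m+1} ≤_W LLPO_m` by adding the last two components, and
`LLPO_m ≤_W LPO` by asking whether the first component vanishes.
-/

theorem projFin_index_div_mod {m i : ℕ} (hi : 1 ≤ i) (him : i ≤ m) (k : ℕ) :
    (m * k + i - 1) / m = k ∧ (m * k + i - 1) % m = i - 1 :=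
  (Nat.div_mod_unique (by omega)).2 ⟨by rw [mul_comm]; omega, by omega⟩

theorem projFin_index_inj {m i j k l : ℕ} (hi : 1 ≤ i) (him : i ≤ m) (hj : 1 ≤ j) (hjm : j ≤ m)
    (h : m * k + i - 1 = m * l + j - 1) : k = l ∧ i = j := by
  obtain ⟨hk, hi'⟩ := projFin_index_div_mod hi him k
  obtain ⟨hl, hj'⟩ := projFin_index_div_mod hj hjm l
  rw [h] at hk hi'
  omega

/-- The tupling `⟨p₁,…,p_m⟩`, indexed from `1` like `projFin`. -/
def tupleFin (m : ℕ) (ps : ℕ → Baire) : Baire := fun j => ps (j % m + 1) (j / m)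

theorem projFin_tupleFin {m i : ℕ} (hi : 1 ≤ i) (him : i ≤ m) (ps : ℕ → Baire) :
    projFin m i (tupleFin m ps) = ps i := by
  funext k
  obtain ⟨hdiv, hmod⟩ := projFin_index_div_mod hi him k
  simp only [projFin, tupleFin, hdiv, hmod, Nat.sub_add_cancel hi]

theorem isZeroSeq_projFin_single {m i j L : ℕ} (hi : 1 ≤ i) (him : i ≤ m) (hj : 1 ≤ j)
    (hjm : j ≤ m) : isZeroSeq (projFin m j (Pi.single (m * L + i - 1) 1)) ↔ j ≠ i := by
  constructor
  · rintro hzero rfl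
    simpa [projFin] using hzero L
  · intro hne k
    simp only [projFin, Pi.single_apply, ite_eq_right_iff, one_ne_zero, imp_false]
    exact fun h => hne (projFin_index_inj hj hjm hi him h).2

theorem continuous_pairB : Continuous fun x : Baire × Baire => pairB x.1 x.2 := by
  refine continuous_pi fun n => ?_
  unfold pairB
  split_ifs
  · exact (continuous_apply _).comp continuous_fst
  · exact (continuous_apply _).comp continuous_snd

theorem tendsto_single_nhds_zero {e : ℕ → ℕ} (he : Tendsto e atTop atTop) (c : ℕ) :
    Tendsto (fun L => (Pi.single (e L) c : Baire)) atTop (𝓝 0) := by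
  refine tendsto_pi_nhds.2 fun k => tendsto_const_nhds.congr' ?_
  filter_upwards [he.eventually_gt_atTop k] with L hL
  simp [hL.ne]

theorem ContinuousWithinAt.eventually_apply_eq {X ι Y : Type*} [TopologicalSpace X]
    [TopologicalSpace Y] [DiscreteTopology Y] {F : X → ι → Y} {D : Set X} {a : X}
    (hF : ContinuousWithinAt F D a) (c : ι) : ∀ᶠ y in 𝓝 a, y ∈ D → F y c = F a c := by
  have : Tendsto (fun y => F y c) (𝓝[D] a) (pure (F a c)) := by
    rw [← nhds_discrete]
    exact ((continuous_apply c).tendsto _).comp hF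
  exact eventually_nhdsWithin_iff.mp (tendsto_pure.mp this)

theorem LPOn_one_sol_apply_zero {r s : Baire} (hs : s ∈ (LPOn 1).sol r) :
    s 0 = 1 ↔ isZeroSeq r := by
  have hproj : projFin 1 1 r = r := by funext k; simp [projFin]
  have hset : {i | 1 ≤ i ∧ i ≤ 1 ∧ isZeroSeq (projFin 1 i r)} = {i | i = 1 ∧ isZeroSeq r} := by
    ext i
    constructor
    · rintro ⟨h1, h2, hz⟩
      obtain rfl : i = 1 := by omega
      exact ⟨rfl, hproj ▸ hz⟩
    · rintro ⟨rfl, hz⟩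
      exact ⟨le_rfl, le_rfl, by rwa [hproj]⟩
  rw [Set.mem_singleton_iff.mp hs]
  by_cases hr : isZeroSeq r <;> simp [constSeq, hset, hr]

theorem le_card_of_separated {M : ℕ} (hM : 2 ≤ M) {Z : ℕ → Prop} {h : ℕ → ℕ}
    {V : Finset ℕ} (hZ : {j | 1 ≤ j ∧ j ≤ M ∧ ¬ Z j}.Subsingleton)
    (hZV : ∀ j ∈ Finset.Icc 1 M, Z j → h j ∈ V)
    (hsep : ∀ v ∈ V, {j | 1 ≤ j ∧ j ≤ M ∧ (¬ Z j ∨ h j = v)}.Subsingleton) :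
    M ≤ V.card := by
  have hZall : ∀ j ∈ Finset.Icc 1 M, Z j := by
    intro j hj
    obtain ⟨h1, h2⟩ := Finset.mem_Icc.mp hj
    by_contra hZj
    obtain ⟨j', h1', h2', hne⟩ : ∃ j', 1 ≤ j' ∧ j' ≤ M ∧ j' ≠ j :=
      ⟨if j = 1 then 2 else 1, by split_ifs <;> omega, by split_ifs <;> omega,
        by split_ifs <;> omega⟩
    have hZj' : Z j' := by
      by_contra hZj'
      exact hne (hZ ⟨h1', h2', hZj'⟩ ⟨h1, h2, hZj⟩)
    exact hne (hsep _ (hZV j' (Finset.mem_Icc.mpr ⟨h1', h2'⟩) hZj') ⟨h1', h2', Or.inr rfl⟩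
      ⟨h1, h2, Or.inl hZj⟩)
  by_contra! hV
  obtain ⟨j₁, hj₁, j₂, hj₂, hne, heq⟩ :=
    Finset.exists_ne_map_eq_of_card_lt_of_maps_to (s := Finset.Icc 1 M) (by simpa using hV)
      fun j hj => hZV j hj (hZall j hj)
  obtain ⟨h1, h2⟩ := Finset.mem_Icc.mp hj₁
  obtain ⟨h1', h2'⟩ := Finset.mem_Icc.mp hj₂
  exact hne (hsep _ (hZV j₁ hj₁ (hZall j₁ hj₁)) ⟨h1, h2, Or.inr rfl⟩
    ⟨h1', h2', Or.inr heq.symm⟩)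

theorem not_wRed_LLPOn {f : Problem} {M : ℕ} (hM : 2 ≤ M) {a : Baire} (ha : a ∈ f.dom)
    {V : Finset ℕ} (hV : V.card < M) (hval : ∀ s ∈ f.sol a, s 0 ∈ V) (P : ℕ → ℕ → Baire)
    (hP : ∀ v ∈ V, Tendsto (P v) atTop (𝓝 a)) (hPdom : ∀ v ∈ V, ∀ L, P v L ∈ f.dom)
    (hPsol : ∀ v ∈ V, ∀ L, ∀ t ∈ f.sol (P v L), t 0 ≠ v) :
    ¬ WRed f (LLPOn M) := by
  rintro ⟨Kd, Hd, K, H, hK, hH, hred⟩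
  obtain ⟨haK, hKa, hsol⟩ := hred a ha
  set Z : ℕ → Prop := fun j => isZeroSeq (projFin M j (K a))
  set h : ℕ → ℕ := fun j => H (pairB a (constSeq j)) 0
  have hZsol : ∀ j ∈ Finset.Icc 1 M, Z j →
      pairB a (constSeq j) ∈ Hd ∧ H (pairB a (constSeq j)) ∈ f.sol a := fun j hj hZj =>
    hsol _ ⟨j, (Finset.mem_Icc.mp hj).1, (Finset.mem_Icc.mp hj).2, hZj, rfl⟩
  refine hV.not_ge (le_card_of_separated hM (Set.encard_le_one_iff_subsingleton.mp hKa)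
    (fun j hj hZj => hval _ (hZsol j hj hZj).2) fun v hv => ?_)
  have hwrong : ∀ j ∈ Finset.Icc 1 M, ∀ᶠ L in atTop,
      ¬ Z j ∨ h j = v → ¬ isZeroSeq (projFin M j (K (P v L))) := by
    intro j hj
    by_cases hZj : Z j
    · have hpair : Tendsto (fun L => pairB (P v L) (constSeq j)) atTop
          (𝓝 (pairB a (constSeq j))) :=
        (continuous_pairB.tendsto (a, constSeq j)).comp
          ((hP v hv).prodMk_nhds tendsto_const_nhds)
      filter_upwards [hpair.eventually ((hH _ (hZsol j hj hZj).1).eventually_apply_eq 0)]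
        with L hL hjv hzero
      obtain ⟨hmem, hsolL⟩ := (hred _ (hPdom v hv L)).2.2 (constSeq j)
        ⟨j, (Finset.mem_Icc.mp hj).1, (Finset.mem_Icc.mp hj).2, hzero, rfl⟩
      exact hPsol v hv L _ hsolL ((hL hmem).trans (hjv.resolve_left (not_not.mpr hZj)))
    · obtain ⟨k, hk⟩ : ∃ k, K a (M * k + j - 1) ≠ 0 := by
        simpa [Z, isZeroSeq, projFin] using hZj
      filter_upwards [(hP v hv).eventually ((hK a haK).eventually_apply_eq (M * k + j - 1))]
        with L hL _ hzero
      exact hk ((hL (hred _ (hPdom v hv L)).1).symm.trans (hzero k))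
  obtain ⟨L, hL⟩ := ((Filter.eventually_all_finset _).2 hwrong).exists
  rintro j₁ ⟨h1, h2, hj₁⟩ j₂ ⟨h1', h2', hj₂⟩
  exact Set.encard_le_one_iff.mp (hred _ (hPdom v hv L)).2.1 j₁ j₂
    ⟨h1, h2, hL j₁ (Finset.mem_Icc.mpr ⟨h1, h2⟩) hj₁⟩
    ⟨h1', h2', hL j₂ (Finset.mem_Icc.mpr ⟨h1', h2'⟩) hj₂⟩

theorem not_wRed_LLPOn_LLPOn_succ {m : ℕ} (hm : 1 ≤ m) : ¬ WRed (LLPOn m) (LLPOn (m + 1)) := by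
  refine not_wRed_LLPOn (V := Finset.Icc 1 m) (by omega)
    (a := constSeq 0) ?_ (by simp) ?_ (fun v L => Pi.single (m * L + v - 1) 1) ?_ ?_ ?_
  · refine Set.encard_le_one_iff.mpr ?_
    rintro i j ⟨-, -, hi⟩
    exact absurd (fun _ => rfl) hi
  · rintro s ⟨i, h1, h2, -, rfl⟩
    exact Finset.mem_Icc.mpr ⟨h1, h2⟩
  · intro v hv
    refine tendsto_single_nhds_zero (tendsto_atTop_mono (fun L => ?_) tendsto_id) 1
    have : L ≤ m * L := Nat.le_mul_of_pos_left L hm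
    have : 1 ≤ v := (Finset.mem_Icc.mp hv).1
    simp only [id]; omega
  · intro v hv L
    obtain ⟨h1, h2⟩ := Finset.mem_Icc.mp hv
    refine Set.encard_le_one_iff.mpr ?_
    rintro i j ⟨hi1, hi2, hi⟩ ⟨hj1, hj2, hj⟩
    rw [isZeroSeq_projFin_single h1 h2 hi1 hi2, not_not] at hi
    rw [isZeroSeq_projFin_single h1 h2 hj1 hj2, not_not] at hj
    rw [hi, hj]
  · rintro v hv L t ⟨i, h1, h2, hi, rfl⟩
    obtain ⟨hv1, hv2⟩ := Finset.mem_Icc.mp hv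
    exact (isZeroSeq_projFin_single hv1 hv2 h1 h2).mp hi

theorem not_wRed_LPOn_one_LLPOn {m : ℕ} (hm : 2 ≤ m) : ¬ WRed (LPOn 1) (LLPOn m) := by
  refine not_wRed_LLPOn (V := {1}) hm (a := constSeq 0) trivial (by simp; omega)
    ?_ (fun _ L => Pi.single L 1) (fun _ _ => tendsto_single_nhds_zero tendsto_id 1)
    (fun _ _ _ => trivial) ?_
  · intro s hs
    exact Finset.mem_singleton.mpr ((LPOn_one_sol_apply_zero hs).mpr fun _ => rfl)
  · intro v hv L t ht hone
    rw [Finset.mem_singleton.mp hv, LPOn_one_sol_apply_zero ht] at hone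
    simpa using hone L

theorem wRed_LLPOn_LPOn_one {m : ℕ} (hm : 2 ≤ m) : WRed (LLPOn m) (LPOn 1) := by
  refine ⟨Set.univ, Set.univ, projFin m 1,
    fun x => if x 1 = 1 then constSeq 1 else constSeq 2, ?_, ?_, ?_⟩
  · exact (continuous_pi fun k => continuous_apply _).continuousOn
  · exact ((continuous_of_discreteTopology
      (f := fun v : ℕ => if v = 1 then constSeq 1 else constSeq 2)).comp
      (continuous_apply 1)).continuousOn
  · intro p hp
    refine ⟨trivial, trivial, fun q hq => ⟨trivial, ?_⟩⟩
    have hq1 : pairB p q 1 = q 0 := rfl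
    simp only [hq1]
    split_ifs with h
    · exact ⟨1, le_rfl, by omega, (LPOn_one_sol_apply_zero hq).mp h, rfl⟩
    · refine ⟨2, by omega, hm, ?_, rfl⟩
      by_contra h2
      have := Set.encard_le_one_iff.mp hp 1 2
        ⟨le_rfl, by omega, fun h1 => h ((LPOn_one_sol_apply_zero hq).mpr h1)⟩ ⟨by omega, hm, h2⟩
      omega

def mergeLast (m : ℕ) (p : Baire) : Baire :=
  tupleFin m fun i =>
    if i = m then projFin (m + 1) m p + projFin (m + 1) (m + 1) p else projFin (m + 1) i p

theorem continuous_mergeLast (m : ℕ) : Continuous (mergeLast m) := by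
  refine continuous_pi fun j => ?_
  simp only [mergeLast, tupleFin]
  split_ifs
  · exact (continuous_apply _).add (continuous_apply _)
  · exact continuous_apply _

theorem isZeroSeq_projFin_mergeLast {m i : ℕ} (hi : 1 ≤ i) (him : i ≤ m) (p : Baire) :
    isZeroSeq (projFin m i (mergeLast m p)) ↔
      isZeroSeq (projFin (m + 1) i p) ∧ (i = m → isZeroSeq (projFin (m + 1) (m + 1) p)) := by
  rw [mergeLast, projFin_tupleFin hi him]
  split_ifs with h
  · subst h
    simp only [isZeroSeq, Pi.add_apply, Nat.add_eq_zero_iff, forall_and, forall_const]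
  · simp [h]

theorem wRed_LLPOn_succ_LLPOn {m : ℕ} (hm : 1 ≤ m) : WRed (LLPOn (m + 1)) (LLPOn m) := by
  refine ⟨Set.univ, Set.univ, mergeLast m, fun x => constSeq (x 1),
    (continuous_mergeLast m).continuousOn,
    (continuous_pi fun _ => continuous_apply 1).continuousOn, fun p hp => ⟨trivial, ?_, ?_⟩⟩
  · have hsub : {i | 1 ≤ i ∧ i ≤ m ∧ ¬ isZeroSeq (projFin m i (mergeLast m p))} ⊆
        (fun i => min i m) '' {i | 1 ≤ i ∧ i ≤ m + 1 ∧ ¬ isZeroSeq (projFin (m + 1) i p)} := by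
      rintro i ⟨h1, h2, hi⟩
      rw [isZeroSeq_projFin_mergeLast h1 h2, not_and_or, Classical.not_imp] at hi
      rcases hi with hi | ⟨rfl, hi⟩
      · exact ⟨i, ⟨h1, by omega, hi⟩, min_eq_left h2⟩
      · exact ⟨i + 1, ⟨by omega, le_rfl, hi⟩, by simp⟩
    exact ((Set.encard_le_encard hsub).trans (Set.encard_image_le _ _)).trans hp
  · rintro q ⟨j, h1, h2, hj, rfl⟩
    refine ⟨trivial, j, h1, by omega, ((isZeroSeq_projFin_mergeLast h1 h2 p).mp hj).1, rfl⟩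

/-- For all `n ≥ 1`: `LLPO_{n+2} <_W LLPO_{n+1} <_W LPO` (with `LPO = LPO₁`). -/
theorem LLPOn_strict : ∀ n, 1 ≤ n →
    WLt (LLPOn (n + 2)) (LLPOn (n + 1)) ∧ WLt (LLPOn (n + 1)) (LPOn 1) := by
  intro n hn
  exact ⟨⟨wRed_LLPOn_succ_LLPOn (by omega), not_wRed_LLPOn_LLPOn_succ (by omega)⟩,
    ⟨wRed_LLPOn_LPOn_one (by omega), not_wRed_LPOn_one_LLPOn (by omega)⟩⟩
end

section
/- The decimal representation continuously reduces to the Cauchy representation but not conversely: there is a partial function F :⊆ ℕ^ℕ → ℕ^ℕ, continuous on its domain, with ρ(F(p)) = ρ_10(p) for all p ∈ dom(ρ_10), but there is no partial function G, continuous on its domain, with ρ_10(G(p)) = ρ(p) for all p ∈ dom(ρ). Moreover, addition is not continuously realizable with respect to the decimal representation: there is no partial function H :⊆ ℕ^ℕ → ℕ^ℕ, continuous on its domain, such that ρ_10(H⟨p,q⟩) = ρ_10(p) + ρ_10(q) for all p, q ∈ dom(ρ_10). -/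
open Filter Topology

/-!
Truncating a decimal expansion after `n` digits changes its value by at most `10⁻ⁿ ≤ 2⁻ⁿ`, and the
`n`-th truncation depends on finitely many digits, so partial sums translate decimal names
continuously into Cauchy names. Conversely, a decimal name `p` denotes a value in
`[ι(p 0), ι(p 0) + 1]`, and a map into decimal names that is continuous on its domain keeps
`ι(p 0)` locally constant. Near a name of an integer `k` its outputs therefore all lie in
`[k - 1, k]` or all in `[k, k + 1]`. But the Cauchy name of `0`, and the pair of decimal names
`0.333…` and `0.666…` of a sum equal to `1`, are limits of names of values on both sides.
-/

section BaireTopology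

variable {α β : Type*} [TopologicalSpace α] [TopologicalSpace β]

lemma eventually_nhds_apply_eq [DiscreteTopology α] (p : ℕ → α) (i : ℕ) :
    ∀ᶠ p' in 𝓝 p, p' i = p i := by
  have h := (continuous_apply i).tendsto p
  rwa [nhds_discrete α, tendsto_pure] at h

lemma continuous_of_forall_lt_eq [DiscreteTopology α] [DiscreteTopology β]
    {F : (ℕ → α) → ℕ → β} (m : ℕ → ℕ)
    (h : ∀ n p p', (∀ i < m n, p i = p' i) → F p n = F p' n) : Continuous F := by
  refine continuous_pi fun n => continuous_iff_continuousAt.2 fun p => ?_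
  rw [ContinuousAt, nhds_discrete β, tendsto_pure]
  have hnear : ∀ᶠ p' in 𝓝 p, ∀ i ∈ Finset.range (m n), p' i = p i :=
    (eventually_all_finset _).2 fun i _ => eventually_nhds_apply_eq p i
  exact hnear.mono fun p' hp' => h n p' p fun i hi => hp' i (Finset.mem_range.2 hi)

lemma tendsto_of_forall_lt_eq {s : ℕ → ℕ → α} {r : ℕ → α} (h : ∀ i m, i < m → s m i = r i) :
    Tendsto s atTop (𝓝 r) :=
  tendsto_pi_nhds.2 fun i => tendsto_const_nhds.congr' <|
    (eventually_gt_atTop i).mono fun m hm => (h i m hm).symm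

lemma ContinuousOn.eventually_apply_eq [DiscreteTopology β] {ι : Type*} {l : Filter ι}
    {F : α → ℕ → β} {D : Set α} (hF : ContinuousOn F D) {r : α} (hr : r ∈ D) {s : ι → α}
    (hs : ∀ m, s m ∈ D) (hlim : Tendsto s l (𝓝 r)) (i : ℕ) :
    ∀ᶠ m in l, F (s m) i = F r i := by
  have h : Tendsto (fun m => F (s m) i) l (𝓝 (F r i)) :=
    ((continuous_apply i).tendsto _).comp <|
      (hF r hr).tendsto.comp (tendsto_nhdsWithin_iff.2 ⟨hlim, .of_forall hs⟩)
  rwa [nhds_discrete β, tendsto_pure] at h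

end BaireTopology

lemma continuous_pairB_s19 : Continuous fun pq : Baire × Baire => pairB pq.1 pq.2 := by
  refine continuous_pi fun n => ?_
  by_cases hn : n % 2 = 0 <;> simp only [pairB, hn, if_true, if_false] <;> fun_prop

def ratIdx (r : ℚ) : ℕ := Nat.pair r.num.toNat (Nat.pair (-r.num).toNat (r.den - 1))

lemma ratEnum_ratIdx (r : ℚ) : ratEnum (ratIdx r) = r := by
  unfold ratEnum ratIdx
  simp only [Nat.unpair_pair]
  have hnum : (r.num.toNat : ℚ) - ((-r.num).toNat : ℚ) = r.num := by
    exact_mod_cast (by omega : (r.num.toNat : ℤ) - ((-r.num).toNat : ℤ) = r.num)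
  have hden : ((r.den - 1 : ℕ) : ℚ) + 1 = r.den := by
    rw [Nat.cast_sub r.pos, Nat.cast_one, sub_add_cancel]
  rw [hnum, hden, Rat.num_div_den]

lemma rhoCauchy_const_ratIdx (r : ℚ) : rhoCauchy (fun _ => ratIdx r) r := fun n => by
  rw [ratEnum_ratIdx, sub_self, abs_zero]
  positivity

section Decimal

def intPart (p : Baire) : ℤ := Denumerable.ofNat ℤ (p 0)

noncomputable def digitSum (p : Baire) : ℝ := ∑' n : ℕ, (p (n + 1) : ℝ) / 10 ^ (n + 1)

lemma rhoDec_iff {p : Baire} {x : ℝ} :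
    rhoDec p x ↔ (∀ n, 1 ≤ n → p n ≤ 9) ∧ x = intPart p + digitSum p := Iff.rfl

lemma hasSum_div_ten_pow (c : ℝ) : HasSum (fun n : ℕ => c / 10 ^ (n + 1)) (c / 9) := by
  have h := (hasSum_geometric_of_lt_one (r := (10 : ℝ)⁻¹) (by norm_num) (by norm_num)).mul_left
    (c / 10)
  have hterm : (fun n : ℕ => c / 10 ^ (n + 1)) = fun n => c / 10 * 10⁻¹ ^ n := by
    ext n
    rw [inv_pow, pow_succ]
    field_simp
  rw [hterm, show c / 9 = c / 10 * (1 - 10⁻¹)⁻¹ by norm_num; ring]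
  exact h

variable {p q : Baire}

lemma summable_digits (hp : ∀ n, 1 ≤ n → p n ≤ 9) :
    Summable fun n : ℕ => (p (n + 1) : ℝ) / 10 ^ (n + 1) :=
  (hasSum_div_ten_pow 9).summable.of_nonneg_of_le (fun _ => by positivity) fun n => by
    gcongr
    exact_mod_cast hp (n + 1) n.succ_pos

lemma digitSum_nonneg (p : Baire) : 0 ≤ digitSum p :=
  tsum_nonneg fun _ => by positivity

lemma digitSum_le_one (hp : ∀ n, 1 ≤ n → p n ≤ 9) : digitSum p ≤ 1 := by
  have h := (summable_digits hp).tsum_le_tsum (fun n => ?_) (hasSum_div_ten_pow 9).summable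
  · rwa [(hasSum_div_ten_pow 9).tsum_eq, div_self (by norm_num)] at h
  · gcongr
    exact_mod_cast hp (n + 1) n.succ_pos

lemma digitSum_eq_div_nine {d : ℕ} (h : ∀ n, 1 ≤ n → p n = d) : digitSum p = d / 9 := by
  rw [← (hasSum_div_ten_pow d).tsum_eq, digitSum]
  exact tsum_congr fun n => by rw [h (n + 1) n.succ_pos]

lemma digitSum_lt_digitSum (hq : ∀ n, 1 ≤ n → q n ≤ 9) (hle : ∀ n, 1 ≤ n → p n ≤ q n)
    {k : ℕ} (hlt : p (k + 1) < q (k + 1)) : digitSum p < digitSum q := by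
  refine (summable_digits fun n hn => (hle n hn).trans (hq n hn)).tsum_lt_tsum (i := k)
    (fun n => ?_) ?_ (summable_digits hq)
  · gcongr
    exact_mod_cast hle (n + 1) n.succ_pos
  · gcongr

lemma digitSum_eq_sum_add (hp : ∀ n, 1 ≤ n → p n ≤ 9) (n : ℕ) :
    digitSum p = ∑ i ∈ Finset.range n, (p (i + 1) : ℝ) / 10 ^ (i + 1) +
      digitSum (fun i => p (i + n)) / 10 ^ n := by
  rw [digitSum, ← (summable_digits hp).sum_add_tsum_nat_add n, digitSum, ← tsum_div_const]
  congr 1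
  refine tsum_congr fun i => ?_
  rw [div_div, ← pow_add, add_right_comm, add_comm (i + 1) n, add_comm n]

lemma rhoDec.mem_Icc {x : ℝ} (h : rhoDec p x) :
    x ∈ Set.Icc (intPart p : ℝ) (intPart p + 1) := by
  obtain ⟨hp, rfl⟩ := rhoDec_iff.1 h
  exact ⟨le_add_of_nonneg_right (digitSum_nonneg p), by linarith [digitSum_le_one hp]⟩

end Decimal

noncomputable def decToCauchy (p : Baire) : Baire := fun n =>
  ratIdx (intPart p + ∑ i ∈ Finset.range n, (p (i + 1) : ℚ) / 10 ^ (i + 1))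

lemma continuous_decToCauchy : Continuous decToCauchy := by
  refine continuous_of_forall_lt_eq (fun n => n + 1) fun n p p' h => ?_
  have hcoord : ∀ i ∈ Finset.range n, (p (i + 1) : ℚ) / 10 ^ (i + 1) = p' (i + 1) / 10 ^ (i + 1) :=
    fun i hi => by rw [h (i + 1) (by simpa using hi)]
  simp only [decToCauchy, intPart, h 0 n.succ_pos, Finset.sum_congr rfl hcoord]

lemma rhoCauchy_decToCauchy {p : Baire} {x : ℝ} (h : rhoDec p x) :
    rhoCauchy (decToCauchy p) x := by
  obtain ⟨hp, rfl⟩ := rhoDec_iff.1 h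
  intro n
  have htail := digitSum_le_one (p := fun i => p (i + n)) fun i hi => hp (i + n) (by omega)
  have hval : ((ratEnum (decToCauchy p n) : ℚ) : ℝ) - (intPart p + digitSum p) =
      -(digitSum (fun i => p (i + n)) / 10 ^ n) := by
    rw [decToCauchy, ratEnum_ratIdx, digitSum_eq_sum_add hp n]
    push_cast
    ring
  calc |((ratEnum (decToCauchy p n) : ℚ) : ℝ) - (intPart p + digitSum p)|
      = digitSum (fun i => p (i + n)) / 10 ^ n := by
        rw [hval, abs_neg, abs_of_nonneg (div_nonneg (digitSum_nonneg _) (by positivity))]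
    _ ≤ 1 / 10 ^ n := by gcongr
    _ ≤ (2 : ℝ) ^ (-(n : ℤ)) := by
        rw [zpow_neg, zpow_natCast, one_div]
        gcongr
        norm_num

theorem exists_continuous_dec_to_cauchy :
    ∃ (Fd : Set Baire) (F : Baire → Baire), ContinuousOn F Fd ∧
      ∀ p x, rhoDec p x → p ∈ Fd ∧ rhoCauchy (F p) x :=
  ⟨Set.univ, decToCauchy, continuous_decToCauchy.continuousOn,
    fun _ _ h => ⟨trivial, rhoCauchy_decToCauchy h⟩⟩

lemma not_continuousOn_of_crossing {f : Baire → Baire} {D : Set Baire} {r : Baire} (hr : r ∈ D)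
    {k : ℤ} (hk : rhoDec (f r) k) {u v : ℕ → Baire} (hu : ∀ m, u m ∈ D) (hv : ∀ m, v m ∈ D)
    (hu_lim : Tendsto u atTop (𝓝 r)) (hv_lim : Tendsto v atTop (𝓝 r)) {xu xv : ℕ → ℝ}
    (hxu : ∀ m, rhoDec (f (u m)) (xu m) ∧ xu m < k)
    (hxv : ∀ m, rhoDec (f (v m)) (xv m) ∧ k < xv m) :
    ¬ ContinuousOn f D := by
  intro hf
  have hrk : intPart (f r) ≤ k ∧ k ≤ intPart (f r) + 1 := by
    have h := hk.mem_Icc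
    exact ⟨by exact_mod_cast h.1, by exact_mod_cast h.2⟩
  rcases eq_or_lt_of_le hrk.1 with hrk_eq | hrk_lt
  · obtain ⟨m, hm⟩ := (hf.eventually_apply_eq hr hu hu_lim 0).exists
    have hbound := ((hxu m).1.mem_Icc).1
    rw [intPart, hm, ← intPart, hrk_eq] at hbound
    linarith [(hxu m).2]
  · obtain ⟨m, hm⟩ := (hf.eventually_apply_eq hr hv hv_lim 0).exists
    have hbound := ((hxv m).1.mem_Icc).2
    rw [intPart, hm, ← intPart] at hbound
    have : (intPart (f r) : ℝ) + 1 ≤ k := by exact_mod_cast hrk_lt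
    linarith [(hxv m).2]

noncomputable def cauchyPerturb (e : ℚ) (m : ℕ) : Baire := fun n =>
  if n < m then ratIdx 0 else ratIdx (e / 2 ^ m)

lemma rhoCauchy_cauchyPerturb {e : ℚ} (he : |(e : ℝ)| ≤ 1) (m : ℕ) :
    rhoCauchy (cauchyPerturb e m) (e / 2 ^ m : ℚ) := by
  intro n
  rw [zpow_neg, zpow_natCast]
  by_cases hn : n < m
  · simp only [cauchyPerturb, hn, if_true, ratEnum_ratIdx]
    push_cast
    rw [zero_sub, abs_neg, abs_div, abs_pow, abs_two, div_eq_mul_inv]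
    calc |(e : ℝ)| * ((2 : ℝ) ^ m)⁻¹ ≤ 1 * ((2 : ℝ) ^ n)⁻¹ := by
          gcongr
          norm_num
      _ = ((2 : ℝ) ^ n)⁻¹ := one_mul _
  · simp only [cauchyPerturb, hn, if_false, ratEnum_ratIdx, sub_self, abs_zero]
    positivity

lemma tendsto_cauchyPerturb (e : ℚ) :
    Tendsto (cauchyPerturb e) atTop (𝓝 fun _ => ratIdx 0) :=
  tendsto_of_forall_lt_eq fun _ _ hi => if_pos hi

theorem not_exists_continuous_cauchy_to_dec :
    ¬ ∃ (Gd : Set Baire) (G : Baire → Baire), ContinuousOn G Gd ∧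
      ∀ p x, rhoCauchy p x → p ∈ Gd ∧ rhoDec (G p) x := by
  rintro ⟨Gd, G, hG, hGname⟩
  have hzero := hGname _ _ (rhoCauchy_const_ratIdx 0)
  have hdown m := hGname _ _ (rhoCauchy_cauchyPerturb (e := -1) (by norm_num) m)
  have hup m := hGname _ _ (rhoCauchy_cauchyPerturb (e := 1) (by norm_num) m)
  refine not_continuousOn_of_crossing hzero.1 (k := 0) (by simpa using hzero.2)
    (fun m => (hdown m).1) (fun m => (hup m).1) (tendsto_cauchyPerturb _) (tendsto_cauchyPerturb _)
    (fun m => ⟨(hdown m).2, ?_⟩) (fun m => ⟨(hup m).2, ?_⟩) hG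
  all_goals push_cast
  · exact div_neg_of_neg_of_pos (by norm_num) (by positivity)
  · positivity

def fracName (d : ℕ → ℕ) : Baire := fun n => if n = 0 then Encodable.encode (0 : ℤ) else d n

lemma rhoDec_fracName {d : ℕ → ℕ} (hd : ∀ n, 1 ≤ n → d n ≤ 9) :
    rhoDec (fracName d) (digitSum d) := by
  have hdigits : ∀ n, 1 ≤ n → fracName d n = d n := fun n hn => if_neg (by omega)
  refine rhoDec_iff.2 ⟨fun n hn => hdigits n hn ▸ hd n hn, ?_⟩
  simp only [intPart, fracName, if_true, Denumerable.ofNat_encode, Int.cast_zero, zero_add]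
  exact tsum_congr fun n => by rw [hdigits (n + 1) n.succ_pos]

def threesThen (m d : ℕ) : ℕ → ℕ := fun n => if n ≤ m then 3 else d

lemma threesThen_le {d : ℕ} (hd : d ≤ 9) (m n : ℕ) : threesThen m d n ≤ 9 := by
  unfold threesThen
  split_ifs <;> omega

lemma tendsto_fracName_threesThen (d : ℕ) :
    Tendsto (fun m => fracName (threesThen m d)) atTop (𝓝 (fracName fun _ => 3)) :=
  tendsto_of_forall_lt_eq fun _ _ hi => by simp only [fracName, threesThen, if_pos hi.le]

lemma digitSum_three : digitSum (fun _ => 3) = 1 / 3 := by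
  rw [digitSum_eq_div_nine (d := 3) fun _ _ => rfl]
  norm_num

lemma digitSum_threesThen_lt (m : ℕ) : digitSum (threesThen m 2) < 1 / 3 := by
  rw [← digitSum_three]
  refine digitSum_lt_digitSum (k := m) (fun _ _ => by norm_num) (fun n _ => ?_) ?_
  · unfold threesThen
    split_ifs <;> omega
  · simp [threesThen]

lemma lt_digitSum_threesThen (m : ℕ) : 1 / 3 < digitSum (threesThen m 4) := by
  rw [← digitSum_three]
  refine digitSum_lt_digitSum (k := m) (fun n _ => threesThen_le (by norm_num) m n)
    (fun n _ => ?_) ?_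
  · unfold threesThen
    split_ifs <;> omega
  · simp [threesThen]

theorem not_exists_continuous_dec_add :
    ¬ ∃ (Hd : Set Baire) (H : Baire → Baire), ContinuousOn H Hd ∧
      ∀ p q x y, rhoDec p x → rhoDec q y →
        pairB p q ∈ Hd ∧ rhoDec (H (pairB p q)) (x + y) := by
  rintro ⟨Hd, H, hH, hHname⟩
  have htwoThirds : digitSum (fun _ => 6) = 2 / 3 := by
    rw [digitSum_eq_div_nine (d := 6) fun _ _ => rfl]
    norm_num
  have hsix := rhoDec_fracName (d := fun _ => 6) fun _ _ => by norm_num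
  have hone := hHname _ _ _ _ (rhoDec_fracName (d := fun _ => 3) fun _ _ => by norm_num) hsix
  have hname {d : ℕ} (hd : d ≤ 9) (m : ℕ) :=
    hHname _ _ _ _ (rhoDec_fracName fun n _ => threesThen_le hd m n) hsix
  have hdown := hname (d := 2) (by norm_num)
  have hup := hname (d := 4) (by norm_num)
  have hlim (d : ℕ) : Tendsto (fun m => pairB (fracName (threesThen m d)) (fracName fun _ => 6))
      atTop (𝓝 (pairB (fracName fun _ => 3) (fracName fun _ => 6))) :=
    (continuous_pairB_s19.tendsto _).comp <|
      (tendsto_fracName_threesThen d).prodMk_nhds tendsto_const_nhds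
  refine not_continuousOn_of_crossing hone.1 (k := 1) ?_ (fun m => (hdown m).1) (fun m => (hup m).1)
    (hlim 2) (hlim 4) (fun m => ⟨(hdown m).2, ?_⟩) (fun m => ⟨(hup m).2, ?_⟩) hH
  · convert hone.2 using 1
    rw [digitSum_three, htwoThirds]
    norm_num
  all_goals push_cast
  · linarith [digitSum_threesThen_lt m]
  · linarith [lt_digitSum_threesThen m]

/-- The decimal representation continuously reduces to the Cauchy representation but not
conversely, and addition is not continuously realizable w.r.t. the decimal representation. -/
theorem decimal_vs_cauchy :
    (∃ (Fd : Set Baire) (F : Baire → Baire), ContinuousOn F Fd ∧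
      ∀ p x, rhoDec p x → p ∈ Fd ∧ rhoCauchy (F p) x) ∧
    (¬ ∃ (Gd : Set Baire) (G : Baire → Baire), ContinuousOn G Gd ∧
      ∀ p x, rhoCauchy p x → p ∈ Gd ∧ rhoDec (G p) x) ∧
    (¬ ∃ (Hd : Set Baire) (H : Baire → Baire), ContinuousOn H Hd ∧
      ∀ p q x y, rhoDec p x → rhoDec q y →
        pairB p q ∈ Hd ∧ rhoDec (H (pairB p q)) (x + y)) :=
  ⟨exists_continuous_dec_to_cauchy, not_exists_continuous_cauchy_to_dec,
    not_exists_continuous_dec_add⟩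
end
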